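/- arXiv:2505.08425 — 3 statements merged into one kernel-verified Lean document; each statement's English description precedes it below -/
import Mathlib

section
/- (Real supply is maximal monotone.) Define the real supply correspondence S̃ : ℝ ⇉ [0,∞) by S̃(ρ) = [Smin(ρ), Smax(ρ)] where Smin(ρ) = ∫_Ω v̄(x)·1{ρ̲(x) < ρ} dΠ(x) and Smax(ρ) = ∫_Ω v̄(x)·1{ρ̲(x) ≤ ρ} dΠ(x). Then: (1) for every ρ ∈ ℝ, Smin(ρ) ≤ Smax(ρ), so S̃(ρ) is a nonempty closed compact interval contained in [0,∞); (2) for every ρ ∈ ℝ, lim_{ρ'→ρ⁺} Smin(ρ') = Smax(ρ); (3) for every ρ ∈ ℝ, lim_{ρ'→ρ⁻} Smax(ρ') = Smin(ρ); moreover lim_{ρ→−∞} Smax(ρ) = 0 and lim_{ρ→+∞} Smin(ρ) = ∫_Ω v̄ dΠ, which is a positive real number (the supremum supply S_max). -/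
/-!
Both supply values are integrals of `vbar` over sublevel sets of `ρlow`. As `ρ' ↓ ρ` the sets
`{ρlow < ρ'}` converge pointwise to `{ρlow ≤ ρ}`, as `ρ' ↑ ρ` the sets `{ρlow ≤ ρ'}` converge to
`{ρlow < ρ}`, and they shrink to `∅` at `-∞` and exhaust `Ω` at `+∞`; dominated convergence, with
the integrable `vbar` as dominating function, turns this into convergence of the integrals.
-/

open MeasureTheory Filter Set Topology

section

variable {Ω E : Type*} [MeasurableSpace Ω] {μ : Measure Ω} [NormedAddCommGroup E] [NormedSpace ℝ E]

theorem integral_ite_eq_setIntegral {p : Ω → Prop} [DecidablePred p] (hp : MeasurableSet {x | p x})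
    (f : Ω → E) : ∫ x, (if p x then f x else 0) ∂μ = ∫ x in {x | p x}, f x ∂μ := by
  rw [← integral_indicator hp]
  simp only [Set.indicator_apply, Set.mem_ofPred_eq]

theorem tendsto_setIntegral_of_eventually_mem_iff {ι : Type*} {l : Filter ι}
    [l.IsCountablyGenerated] {f : Ω → E} (hf : Integrable f μ) {s : ι → Set Ω}
    (hs : ∀ i, MeasurableSet (s i)) {t : Set Ω} (ht : MeasurableSet t)
    (hst : ∀ x, ∀ᶠ i in l, (x ∈ s i ↔ x ∈ t)) :
    Tendsto (fun i => ∫ x in s i, f x ∂μ) l (𝓝 (∫ x in t, f x ∂μ)) := by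
  simp_rw [← integral_indicator (hs _), ← integral_indicator ht]
  refine tendsto_integral_filter_of_dominated_convergence (fun x => ‖f x‖)
    (Eventually.of_forall fun i => (hf.indicator (hs i)).aestronglyMeasurable)
    (Eventually.of_forall fun i => Eventually.of_forall fun x => norm_indicator_le_norm_self _ _)
    hf.norm (Eventually.of_forall fun x => tendsto_const_nhds.congr' ?_)
  filter_upwards [hst x] with i hi
  by_cases hx : x ∈ t <;> simp [hx, hi]

end

section

variable {α : Type*} [LinearOrder α] [TopologicalSpace α] [OrderTopology α]

theorem eventually_lt_iff_le_nhdsGT (a b : α) : ∀ᶠ c in 𝓝[>] b, (a < c ↔ a ≤ b) := by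
  rcases le_or_gt a b with hab | hba
  · filter_upwards [self_mem_nhdsWithin] with c hc
    exact iff_of_true (hab.trans_lt hc) hab
  · filter_upwards [nhdsWithin_le_nhds (eventually_lt_nhds hba)] with c hc
    exact iff_of_false hc.not_gt hba.not_ge

theorem eventually_le_iff_lt_nhdsLT (a b : α) : ∀ᶠ c in 𝓝[<] b, (a ≤ c ↔ a < b) := by
  rcases lt_or_ge a b with hab | hba
  · filter_upwards [nhdsWithin_le_nhds (eventually_gt_nhds hab)] with c hc
    exact iff_of_true hc.le hab
  · filter_upwards [self_mem_nhdsWithin] with c hc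
    exact iff_of_false (hc.trans_le hba).not_ge hba.not_gt

end

/-- **Real supply is maximal monotone.** Given a probability space `(Ω, P)`, an integrable
positive willing-to-contract supply volume `vbar`, and a measurable lowest supply price
willing to take `ρlow`, the real supply correspondence `S̃(ρ) = [Smin ρ, Smax ρ]` is a
maximal monotone operator: each value is a nonempty closed compact interval in `[0,∞)`,
the right limit of `Smin` at `ρ` is `Smax ρ`, the left limit of `Smax` at `ρ` is `Smin ρ`,
`Smax → 0` at `-∞`, and `Smin → ∫ vbar dP` (the supremum supply, a positive real) at `+∞`. -/
theorem real_supply_maximal_monotone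
    {Ω : Type*} [MeasurableSpace Ω] (P : Measure Ω) [IsProbabilityMeasure P]
    (vbar : Ω → ℝ) (hv_int : Integrable vbar P) (hv_pos : ∀ x, 0 < vbar x)
    (ρlow : Ω → ℝ) (hρ : Measurable ρlow)
    (Smin Smax : ℝ → ℝ)
    (hSmin : ∀ ρ, Smin ρ = ∫ x, (if ρlow x < ρ then vbar x else 0) ∂P)
    (hSmax : ∀ ρ, Smax ρ = ∫ x, (if ρlow x ≤ ρ then vbar x else 0) ∂P) :
    (∀ ρ, 0 ≤ Smin ρ ∧ Smin ρ ≤ Smax ρ) ∧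
    (∀ ρ, Tendsto Smin (nhdsWithin ρ (Ioi ρ)) (nhds (Smax ρ))) ∧
    (∀ ρ, Tendsto Smax (nhdsWithin ρ (Iio ρ)) (nhds (Smin ρ))) ∧
    Tendsto Smax atBot (nhds 0) ∧
    Tendsto Smin atTop (nhds (∫ x, vbar x ∂P)) ∧
    0 < ∫ x, vbar x ∂P := by
  have hlt : ∀ ρ, MeasurableSet {x | ρlow x < ρ} := fun ρ => measurableSet_lt hρ measurable_const
  have hle : ∀ ρ, MeasurableSet {x | ρlow x ≤ ρ} := fun ρ => measurableSet_le hρ measurable_const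
  obtain rfl : Smin = fun ρ => ∫ x in {x | ρlow x < ρ}, vbar x ∂P :=
    funext fun ρ => (hSmin ρ).trans (integral_ite_eq_setIntegral (hlt ρ) vbar)
  obtain rfl : Smax = fun ρ => ∫ x in {x | ρlow x ≤ ρ}, vbar x ∂P :=
    funext fun ρ => (hSmax ρ).trans (integral_ite_eq_setIntegral (hle ρ) vbar)
  have hv_nonneg : 0 ≤ vbar := fun x => (hv_pos x).le
  refine ⟨fun ρ => ⟨setIntegral_nonneg (hlt ρ) fun x _ => hv_nonneg x, ?_⟩,
    fun ρ => tendsto_setIntegral_of_eventually_mem_iff hv_int hlt (hle ρ)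
      fun x => eventually_lt_iff_le_nhdsGT (ρlow x) ρ,
    fun ρ => tendsto_setIntegral_of_eventually_mem_iff hv_int hle (hlt ρ)
      fun x => eventually_le_iff_lt_nhdsLT (ρlow x) ρ, ?_, ?_, ?_⟩
  · exact setIntegral_mono_set hv_int.integrableOn (Eventually.of_forall hv_nonneg)
      (Eventually.of_forall fun x (hx : ρlow x < ρ) => hx.le)
  · simpa using tendsto_setIntegral_of_eventually_mem_iff (t := ∅) hv_int hle .empty
      fun x => (eventually_lt_atBot (ρlow x)).mono fun ρ hρ => iff_of_false hρ.not_ge id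
  · simpa using tendsto_setIntegral_of_eventually_mem_iff (t := univ) hv_int hlt .univ
      fun x => (eventually_gt_atTop (ρlow x)).mono fun ρ hρ => iff_of_true hρ trivial
  · rw [integral_pos_iff_support_of_nonneg hv_nonneg hv_int,
      Function.support_eq_univ fun x => (hv_pos x).ne', measure_univ]
    exact one_pos
end

section
/- (Betrayal-free-collusion-free equilibria are Nash equilibria.) In any normal form game with a continuum of agents (𝒜, 𝒮, n, (U^(s))_{s∈𝒮}), every betrayal-free-collusion-free equilibrium strategy s ∈ 𝒮 is a Nash equilibrium strategy. -/
open MeasureTheory Set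
open scoped Classical

/-- The collection of good Borel subsets of `[0,1)`: Borel sets that are either finite and
nonempty or have positive Lebesgue measure. -/
def goodBorel : Set (Set ℝ) :=
  {B | MeasurableSet B ∧ B ⊆ Set.Ico (0:ℝ) 1 ∧
    ((B.Finite ∧ B.Nonempty) ∨ 0 < volume B)}

/-- The conditional uniform measure `I_G(A)`: for finite `G` it is `|A ∩ G| / |G|`; otherwise
it is `λ(A ∩ G) / λ(G)` where `λ` is Lebesgue measure. -/
noncomputable def condUniform (G A : Set ℝ) : ℝ :=
  if G.Finite then ((A ∩ G).ncard : ℝ) / (G.ncard : ℝ)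
  else (volume (A ∩ G)).toReal / (volume G).toReal

/-- The admissible collusion deviated strategies set `𝒮^(f,G)`: admissible joint strategies
agreeing with `f` on `[0,1) ∖ G`. -/
def deviations {α : Type*} (S : Set (ℝ → α)) (f : ℝ → α) (G : Set ℝ) : Set (ℝ → α) :=
  {s' ∈ S | ∀ x ∈ Set.Ico (0:ℝ) 1 \ G, s' x = f x}

/-- `s` is a Nash equilibrium strategy: no agent `y ∈ [0,1)` benefits (in the lexicographic
order on `ℝⁿ`) from unilaterally deviating to any admissible action `a ∈ 𝒜`. -/
def IsNashEq {d n : ℕ} (A : Set (Fin d → ℝ)) (S : Set (ℝ → Fin d → ℝ))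
    (U : (ℝ → Fin d → ℝ) → ℝ → Fin n → ℝ) (s : ℝ → Fin d → ℝ) : Prop :=
  ∀ y ∈ Set.Ico (0:ℝ) 1, ∀ a ∈ A,
    toLex (U (Function.update s y a) y) ≤ toLex (U s y)

/-- `s` is a collusion-free equilibrium strategy: for every good Borel coalition `G` and every
admissible collusion deviation `s'`, a positive `I_G`-fraction of the coalition is strictly
worse off under `s'` than under `s` (lexicographically). -/
def IsCollusionFreeEq {d n : ℕ} (A : Set (Fin d → ℝ)) (S : Set (ℝ → Fin d → ℝ))
    (U : (ℝ → Fin d → ℝ) → ℝ → Fin n → ℝ) (s : ℝ → Fin d → ℝ) : Prop :=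
  ∀ G ∈ goodBorel, ∀ s' ∈ deviations S s G,
    0 < condUniform G {x ∈ G | toLex (U s' x) < toLex (U s x)}

/-- `s` is a betrayal-free-collusion-free equilibrium strategy: for every good Borel coalition
`G` and every admissible collusion deviation `s'`, either a positive `I_G`-fraction of the
coalition is strictly worse off, or some subcoalition `G' ⊆ G` (with `G'` and `G ∖ G'` good
Borel) can betray via some `s'' ∈ 𝒮^(s',G')` making `I_{G'}`-almost every member of `G'`
strictly better off than under `s'` while a positive `I_{G∖G'}`-fraction of `G ∖ G'` is weakly
worse off than under `s`. -/
def IsBFCFEq {d n : ℕ} (A : Set (Fin d → ℝ)) (S : Set (ℝ → Fin d → ℝ))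
    (U : (ℝ → Fin d → ℝ) → ℝ → Fin n → ℝ) (s : ℝ → Fin d → ℝ) : Prop :=
  ∀ G ∈ goodBorel, ∀ s' ∈ deviations S s G,
    0 < condUniform G {x ∈ G | toLex (U s' x) < toLex (U s x)} ∨
    ∃ G' ⊆ G, G' ∈ goodBorel ∧ (G \ G') ∈ goodBorel ∧
      ∃ s'' ∈ deviations S s' G',
        condUniform G' {x ∈ G' | toLex (U s' x) < toLex (U s'' x)} = 1 ∧
        0 < condUniform (G \ G') {x ∈ G \ G' | toLex (U s'' x) ≤ toLex (U s x)}

/-!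
A profitable unilateral deviation of agent `y` is a collusion of the one-point coalition `{y}`.
Its only member is strictly better off, so the first alternative of the betrayal-free condition
fails; and a singleton cannot be split into two good coalitions `G'` and `{y} ∖ G'`, since good
coalitions are nonempty, so no betrayal is possible either.
-/

theorem singleton_mem_goodBorel {y : ℝ} (hy : y ∈ Ico (0 : ℝ) 1) : {y} ∈ goodBorel :=
  ⟨measurableSet_singleton y, singleton_subset_iff.mpr hy,
    Or.inl ⟨finite_singleton y, singleton_nonempty y⟩⟩

theorem nonempty_of_mem_goodBorel {B : Set ℝ} (hB : B ∈ goodBorel) : B.Nonempty := by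
  rcases hB.2.2 with ⟨-, hne⟩ | hpos
  · exact hne
  · exact nonempty_of_measure_ne_zero hpos.ne'

theorem nontrivial_of_goodBorel_split {G G' : Set ℝ} (hG' : G' ∈ goodBorel)
    (hdiff : G \ G' ∈ goodBorel) (hsub : G' ⊆ G) : G.Nontrivial := by
  obtain ⟨x, hx⟩ := nonempty_of_mem_goodBorel hG'
  obtain ⟨z, hzG, hzG'⟩ := nonempty_of_mem_goodBorel hdiff
  exact nontrivial_of_mem_mem_ne (hsub hx) hzG (ne_of_mem_of_not_mem hx hzG')

theorem condUniform_empty (G : Set ℝ) : condUniform G ∅ = 0 := by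
  simp [condUniform]

theorem update_mem_deviations {α : Type*} {S : Set (ℝ → α)} {f : ℝ → α} {y : ℝ} {a : α}
    (h : Function.update f y a ∈ S) : Function.update f y a ∈ deviations S f {y} :=
  ⟨h, fun _ hx => Function.update_of_ne hx.2 a f⟩

theorem bfcf_isNash_general {d n : ℕ}
    (A : Set (Fin d → ℝ))
    (S : Set (ℝ → Fin d → ℝ))
    (hS_upd : ∀ s ∈ S, ∀ y ∈ Set.Ico (0:ℝ) 1, ∀ a ∈ A, Function.update s y a ∈ S)
    (U : (ℝ → Fin d → ℝ) → ℝ → Fin n → ℝ)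
    (s : ℝ → Fin d → ℝ) (hs : s ∈ S)
    (hBFCF : IsBFCFEq A S U s) :
    IsNashEq A S U s := by
  intro y hy a ha
  by_contra! hprofit
  rcases hBFCF {y} (singleton_mem_goodBorel hy) _
      (update_mem_deviations (hS_upd s hs y hy a ha)) with hworse | ⟨G', hsub, hG', hdiff, -⟩
  · have hnone : {x ∈ ({y} : Set ℝ) |
        toLex (U (Function.update s y a) x) < toLex (U s x)} = ∅ := by
      refine eq_empty_of_forall_notMem fun x ⟨hx, hworse_x⟩ => ?_
      rw [mem_singleton_iff.mp hx] at hworse_x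
      exact hprofit.not_gt hworse_x
    rw [hnone, condUniform_empty] at hworse
    exact hworse.false
  · exact not_nontrivial_singleton (nontrivial_of_goodBorel_split hG' hdiff hsub)

/-- **Betrayal-free-collusion-free equilibria are Nash equilibria.** In any normal form game
with a continuum of agents `[0,1)` — action set `𝒜 ⊆ ℝ^d` nonempty, admissible joint
strategies `𝒮` measurable, `𝒜`-valued on `[0,1)`, and closed under single-point updates, with
measurable lexicographic utilities `U^(s) : [0,1) → ℝⁿ` — every betrayal-free-collusion-free
equilibrium strategy is a Nash equilibrium strategy. -/
theorem bfcf_isNash {d n : ℕ}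
    (A : Set (Fin d → ℝ)) (hA : A.Nonempty)
    (S : Set (ℝ → Fin d → ℝ))
    (hS_meas : ∀ s ∈ S, Measurable s)
    (hS_val : ∀ s ∈ S, ∀ x ∈ Set.Ico (0:ℝ) 1, s x ∈ A)
    (hS_upd : ∀ s ∈ S, ∀ y ∈ Set.Ico (0:ℝ) 1, ∀ a ∈ A, Function.update s y a ∈ S)
    (U : (ℝ → Fin d → ℝ) → ℝ → Fin n → ℝ)
    (hU_meas : ∀ s ∈ S, Measurable (U s))
    (s : ℝ → Fin d → ℝ) (hs : s ∈ S)
    (hBFCF : IsBFCFEq A S U s) :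
    IsNashEq A S U s :=
  bfcf_isNash_general A S hS_upd U s hs hBFCF
end

section
/- (Supply Price Finding.) For ρ ∈ ℝ and q ∈ [0,1] with s := (1−q)·Smin(ρ) + q·Smax(ρ) > 0, define ĝ(ρ,q) = ( ((1−q)·p̲(ρ)·Smin(ρ) + q·p̄(ρ)·Smax(ρ))/s , s ). Then for every (p,s) ∈ ℝ × (0,∞) there is at most one ρ ∈ ℝ for which there exists q ∈ [0,1] with ĝ(ρ,q) = (p,s). Consequently, on the supply graph G = {ĝ(ρ,q) : ρ ∈ ℝ, q ∈ [0,1], (1−q)Smin(ρ)+qSmax(ρ) > 0} there is a well-defined supply price finding function ρ̂ : G → ℝ with (p,s) ∈ {ĝ(ρ̂(p,s), q) : q ∈ [0,1]} for every (p,s) ∈ G. -/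
open Set Filter

/-- The supply plotting function: for supply price `ρ` and residual ratio `q`, with acquired
volume `s = (1-q)·Smin ρ + q·Smax ρ`, it returns the pair (per-unit supply cost, volume)
`( ((1-q)·p̲(ρ)·Smin(ρ) + q·p̄(ρ)·Smax(ρ)) / s , s )`. -/
noncomputable def supplyPlot (Smin Smax pl pb : ℝ → ℝ) (ρ q : ℝ) : ℝ × ℝ :=
  (((1 - q) * pl ρ * Smin ρ + q * pb ρ * Smax ρ) / ((1 - q) * Smin ρ + q * Smax ρ),
    (1 - q) * Smin ρ + q * Smax ρ)

/-- The supply graph: points of the plane attained by the supply plotting function at some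
supply price `ρ` and residual ratio `q ∈ [0,1]` with positive acquired supply volume. -/
noncomputable def supplyGraph (Smin Smax pl pb : ℝ → ℝ) : Set (ℝ × ℝ) :=
  {y | ∃ ρ : ℝ, ∃ q ∈ Set.Icc (0:ℝ) 1,
    0 < (1 - q) * Smin ρ + q * Smax ρ ∧ supplyPlot Smin Smax pl pb ρ q = y}

open Topology

/-!
If two supply prices `ρ₂ < ρ₁` plot to the same point `(p, s)`, then `s` lies in
`[Smin ρ₁, Smax ρ₂]`, while the left-limit relation gives `Smax ρ₂ ≤ Smin ρ₁`; hence
`Smax ρ₂ = s = Smin ρ₁`, which forces `p = p̄ ρ₂` and `p = p̲ ρ₁`. At any price `ρ` strictly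
between them `Smin ρ = Smax ρ = s`, so the Supply Monotone Trend yields
`p̄ ρ₂ < p̄ ρ = p̲ ρ < p̲ ρ₁`, a contradiction.
-/

theorem Monotone.le_of_tendsto_nhdsLT {α β : Type*} [TopologicalSpace α] [LinearOrder α]
    [OrderTopology α] [DenselyOrdered α] [TopologicalSpace β] [Preorder β]
    [OrderClosedTopology β] {f : α → β} {a b : α} {y : β} (hf : Monotone f)
    (hlim : Tendsto f (𝓝[<] b) (𝓝 y)) (hab : a < b) : f a ≤ y :=
  haveI := nhdsLT_neBot_of_exists_lt ⟨a, hab⟩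
  _root_.ge_of_tendsto hlim (mem_of_superset (Ioo_mem_nhdsLT hab) fun _ hx ↦ hf hx.1.le)

section SupplyPlot

variable {Smin Smax pl pb : ℝ → ℝ} {ρ q p s : ℝ}

theorem supplyPlot_snd_mem_Icc (hS : Smin ρ ≤ Smax ρ) (hq : q ∈ Icc (0 : ℝ) 1) :
    (supplyPlot Smin Smax pl pb ρ q).2 ∈ Icc (Smin ρ) (Smax ρ) := by
  obtain ⟨hq0, hq1⟩ := hq
  constructor <;> dsimp only [supplyPlot] <;> nlinarith

theorem supplyPlot_fst_eq_pb (h_agree : Smin ρ = Smax ρ → pb ρ = pl ρ)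
    (hplot : supplyPlot Smin Smax pl pb ρ q = (p, s)) (hs : s ≠ 0) (hmax : Smax ρ = s) :
    p = pb ρ := by
  simp only [supplyPlot, Prod.mk.injEq] at hplot
  obtain ⟨hp, hvol⟩ := hplot
  have hnum : (1 - q) * pl ρ * Smin ρ + q * pb ρ * Smax ρ = pb ρ * s := by
    rcases eq_or_ne q 1 with rfl | hq
    · rw [hmax]; ring
    · have hmin : Smin ρ = Smax ρ :=
        (mul_right_inj' (sub_ne_zero.2 hq.symm)).1 (by linarith)
      rw [h_agree hmin, hmin, hmax]; ring
  rw [← hp, hnum, hvol, mul_div_cancel_right₀ _ hs]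

theorem supplyPlot_fst_eq_pl (h_agree : Smin ρ = Smax ρ → pb ρ = pl ρ)
    (hplot : supplyPlot Smin Smax pl pb ρ q = (p, s)) (hs : s ≠ 0) (hmin : Smin ρ = s) :
    p = pl ρ := by
  simp only [supplyPlot, Prod.mk.injEq] at hplot
  obtain ⟨hp, hvol⟩ := hplot
  have hnum : (1 - q) * pl ρ * Smin ρ + q * pb ρ * Smax ρ = pl ρ * s := by
    rcases eq_or_ne q 0 with rfl | hq
    · rw [hmin]; ring
    · have hmax : Smax ρ = Smin ρ := (mul_right_inj' hq).1 (by linarith)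
      rw [← h_agree hmax.symm, hmax, hmin]; ring
  rw [← hp, hnum, hvol, mul_div_cancel_right₀ _ hs]

end SupplyPlot

theorem le_of_supplyPlot_eq {Smin Smax pl pb : ℝ → ℝ} (hSmax_mono : Monotone Smax)
    (hS_le : ∀ ρ, Smin ρ ≤ Smax ρ) (hS_left : ∀ ρ, Tendsto Smax (𝓝[<] ρ) (𝓝 (Smin ρ)))
    (h_agree : ∀ ρ, Smin ρ = Smax ρ → pb ρ = pl ρ)
    (h_trend_max : ∀ ρ₁ ρ₂ : ℝ, ρ₂ < ρ₁ → Smax ρ₁ = Smax ρ₂ → 0 < Smax ρ₁ → pb ρ₂ < pb ρ₁)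
    (h_trend_min : ∀ ρ₁ ρ₂ : ℝ, ρ₂ < ρ₁ → Smin ρ₁ = Smin ρ₂ → 0 < Smin ρ₁ → pl ρ₂ < pl ρ₁)
    {p s ρ₁ ρ₂ q₁ q₂ : ℝ} (hs : 0 < s)
    (hq₁ : q₁ ∈ Icc (0 : ℝ) 1) (hq₂ : q₂ ∈ Icc (0 : ℝ) 1)
    (h₁ : supplyPlot Smin Smax pl pb ρ₁ q₁ = (p, s))
    (h₂ : supplyPlot Smin Smax pl pb ρ₂ q₂ = (p, s)) : ρ₁ ≤ ρ₂ := by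
  by_contra! hlt
  have h_gap : ∀ a b, a < b → Smax a ≤ Smin b := fun a b ↦
    hSmax_mono.le_of_tendsto_nhdsLT (hS_left b)
  have hs₁ := supplyPlot_snd_mem_Icc (pl := pl) (pb := pb) (hS_le ρ₁) hq₁
  have hs₂ := supplyPlot_snd_mem_Icc (pl := pl) (pb := pb) (hS_le ρ₂) hq₂
  rw [h₁] at hs₁
  rw [h₂] at hs₂
  have hmin₁ : Smin ρ₁ = s := le_antisymm hs₁.1 (hs₂.2.trans (h_gap _ _ hlt))
  have hmax₂ : Smax ρ₂ = s := le_antisymm ((h_gap _ _ hlt).trans hs₁.1) hs₂.2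
  have hp₁ : p = pl ρ₁ := supplyPlot_fst_eq_pl (h_agree ρ₁) h₁ hs.ne' hmin₁
  have hp₂ : p = pb ρ₂ := supplyPlot_fst_eq_pb (h_agree ρ₂) h₂ hs.ne' hmax₂
  obtain ⟨ρ, hρ₂, hρ₁⟩ := exists_between hlt
  have hminρ : Smin ρ = s := le_antisymm (hmin₁ ▸ (hS_le ρ).trans (h_gap _ _ hρ₁))
    (hmax₂ ▸ h_gap _ _ hρ₂)
  have hmaxρ : Smax ρ = s := le_antisymm (hmin₁ ▸ h_gap _ _ hρ₁)
    (hmax₂ ▸ (h_gap _ _ hρ₂).trans (hS_le ρ))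
  have hb := h_trend_max ρ ρ₂ hρ₂ (hmaxρ.trans hmax₂.symm) (hmaxρ ▸ hs)
  have hl := h_trend_min ρ₁ ρ hρ₁ (hmin₁.trans hminρ.symm) (hmin₁ ▸ hs)
  have hρ := h_agree ρ (hminρ.trans hmaxρ.symm)
  linarith

theorem supply_price_finding_general
    (Smin Smax : ℝ → ℝ)
    (hSmax_mono : Monotone Smax)
    (hS_le : ∀ ρ, Smin ρ ≤ Smax ρ)
    (hS_left : ∀ ρ, Tendsto Smax (nhdsWithin ρ (Set.Iio ρ)) (nhds (Smin ρ)))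
    (pl pb : ℝ → ℝ)
    (h_agree : ∀ ρ, Smin ρ = Smax ρ → pb ρ = pl ρ)
    (h_trend_max : ∀ ρ₁ ρ₂ : ℝ, ρ₂ < ρ₁ → Smax ρ₁ = Smax ρ₂ → 0 < Smax ρ₁ → pb ρ₂ < pb ρ₁)
    (h_trend_min : ∀ ρ₁ ρ₂ : ℝ, ρ₂ < ρ₁ → Smin ρ₁ = Smin ρ₂ → 0 < Smin ρ₁ → pl ρ₂ < pl ρ₁) :
    (∀ p s : ℝ, 0 < s → ∀ ρ₁ ρ₂ : ℝ, ∀ q₁ ∈ Set.Icc (0:ℝ) 1, ∀ q₂ ∈ Set.Icc (0:ℝ) 1,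
      supplyPlot Smin Smax pl pb ρ₁ q₁ = (p, s) →
      supplyPlot Smin Smax pl pb ρ₂ q₂ = (p, s) → ρ₁ = ρ₂) ∧
    ∃ ρhat : (supplyGraph Smin Smax pl pb) → ℝ,
      ∀ x : (supplyGraph Smin Smax pl pb),
        ∃ q ∈ Set.Icc (0:ℝ) 1, supplyPlot Smin Smax pl pb (ρhat x) q = (x : ℝ × ℝ) := by
  have h_le := @le_of_supplyPlot_eq Smin Smax pl pb hSmax_mono hS_le hS_left h_agree
    h_trend_max h_trend_min
  refine ⟨fun p s hs ρ₁ ρ₂ q₁ hq₁ q₂ hq₂ h₁ h₂ ↦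
    le_antisymm (h_le hs hq₁ hq₂ h₁ h₂) (h_le hs hq₂ hq₁ h₂ h₁), fun x ↦ x.2.choose, fun x ↦ ?_⟩
  obtain ⟨q, hq, -, hplot⟩ := x.2.choose_spec
  exact ⟨q, hq, hplot⟩

/-- **Supply Price Finding.** Let `Smin ≤ Smax` be non-decreasing bounded nonnegative
functions satisfying the maximal monotonicity relations (right limit of `Smin` is `Smax`,
left limit of `Smax` is `Smin`), and let the supply cost functions `p̲, p̄` agree wherever
`Smin = Smax` and satisfy the Supply Monotone Trend. Then every point `(p,s)` with `s > 0`
is attained by the supply plotting function at at most one supply price `ρ`; consequently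
there is a well-defined supply price finding function `ρ̂` on the supply graph, recovering for
each point some residual ratio `q ∈ [0,1]` plotting to it. -/
theorem supply_price_finding
    (Smin Smax : ℝ → ℝ)
    (hSmin_mono : Monotone Smin) (hSmax_mono : Monotone Smax)
    (hS_nonneg : ∀ ρ, 0 ≤ Smin ρ) (hS_le : ∀ ρ, Smin ρ ≤ Smax ρ)
    (hS_bdd : ∃ C : ℝ, ∀ ρ, Smax ρ ≤ C)
    (hS_right : ∀ ρ, Tendsto Smin (nhdsWithin ρ (Set.Ioi ρ)) (nhds (Smax ρ)))
    (hS_left : ∀ ρ, Tendsto Smax (nhdsWithin ρ (Set.Iio ρ)) (nhds (Smin ρ)))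
    (pl pb : ℝ → ℝ)
    (h_agree : ∀ ρ, Smin ρ = Smax ρ → pb ρ = pl ρ)
    (h_trend_max : ∀ ρ₁ ρ₂ : ℝ, ρ₂ < ρ₁ → Smax ρ₁ = Smax ρ₂ → 0 < Smax ρ₁ → pb ρ₂ < pb ρ₁)
    (h_trend_min : ∀ ρ₁ ρ₂ : ℝ, ρ₂ < ρ₁ → Smin ρ₁ = Smin ρ₂ → 0 < Smin ρ₁ → pl ρ₂ < pl ρ₁) :
    (∀ p s : ℝ, 0 < s → ∀ ρ₁ ρ₂ : ℝ, ∀ q₁ ∈ Set.Icc (0:ℝ) 1, ∀ q₂ ∈ Set.Icc (0:ℝ) 1,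
      supplyPlot Smin Smax pl pb ρ₁ q₁ = (p, s) →
      supplyPlot Smin Smax pl pb ρ₂ q₂ = (p, s) → ρ₁ = ρ₂) ∧
    ∃ ρhat : (supplyGraph Smin Smax pl pb) → ℝ,
      ∀ x : (supplyGraph Smin Smax pl pb),
        ∃ q ∈ Set.Icc (0:ℝ) 1, supplyPlot Smin Smax pl pb (ρhat x) q = (x : ℝ × ℝ) :=
  supply_price_finding_general Smin Smax hSmax_mono hS_le hS_left pl pb h_agree h_trend_max
    h_trend_min
end
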